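/- arXiv:2503.15933 — 2 statements merged into one kernel-verified Lean document; each statement's English description precedes it below -/
import Mathlib

section
/- Let γ be a closed convex cone in ℝ^n with nonempty interior and let A ⊆ ℝ^n be a dense subgroup. Then the family {γ̊ − a : a ∈ A} is already a basis of the γ-topology. -/
open Pointwise Filter Topology

/-! The interior `γ̊` of the cone is open, absorbs `γ`, and accumulates at `0` (it contains the
ray `t • v`, `t > 0`, through any of its points `v`). Given a `γ`-open `U ∋ x`, the set of
`b ∈ U` with `x - b ∈ γ̊` is open and nonempty (because `0 ∈ closure γ̊`), so the dense subgroup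
`A` meets it; then `x ∈ γ̊ + b` and `γ̊ + b ⊆ U + γ = U`. -/

theorem preimage_add_right_add_subset {M : Type*} [AddCommSemigroup M] {C t : Set M}
    (h : C + t ⊆ C) (a : M) :
    {x | x + a ∈ C} + t ⊆ {x | x + a ∈ C} := by
  rintro _ ⟨x, hx, y, hy, rfl⟩
  simpa only [Set.mem_ofPred_eq, add_right_comm x y a] using h (Set.add_mem_add hx hy)

section TopologicalAddGroup

variable {G : Type*} [AddCommGroup G] [TopologicalSpace G] [IsTopologicalAddGroup G]

theorem exists_mem_sub_mem_of_zero_mem_closure {s U : Set G} {x : G} (hU : IsOpen U)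
    (hx : x ∈ U) (hs : 0 ∈ closure s) : ∃ y ∈ s, x - y ∈ U := by
  have hnhds : (fun y => x - y) ⁻¹' U ∈ 𝓝 (0 : G) :=
    (continuous_const.sub continuous_id).continuousAt.preimage_mem_nhds
      (by simpa using hU.mem_nhds hx)
  obtain ⟨y, hyU, hys⟩ := mem_closure_iff_nhds.mp hs _ hnhds
  exact ⟨y, hys, hyU⟩

theorem IsOpen.add_eq_of_add_subset {U t : Set G} (hU : IsOpen U) (h : U + t ⊆ U)
    (ht : 0 ∈ closure t) : U + t = U := by
  refine h.antisymm fun x hx => ?_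
  obtain ⟨y, hyt, hxy⟩ := exists_mem_sub_mem_of_zero_mem_closure hU hx ht
  exact ⟨x - y, hxy, y, hyt, sub_add_cancel x y⟩

theorem interior_add_subset_interior {s t : Set G} (h : s + t ⊆ s) :
    interior s + t ⊆ interior s :=
  interior_maximal ((Set.add_subset_add_right interior_subset).trans h) isOpen_interior.add_right

theorem exists_mem_add_mem_neg_mem_of_dense {A : AddSubgroup G}
    (hA : Dense (A : Set G)) {C U : Set G} (hC : IsOpen C) (hC0 : 0 ∈ closure C)
    (hU : IsOpen U) {x : G} (hx : x ∈ U) : ∃ a ∈ A, x + a ∈ C ∧ -a ∈ U := by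
  obtain ⟨y, hyC, hxy⟩ := exists_mem_sub_mem_of_zero_mem_closure hU hx hC0
  have hopen : IsOpen (U ∩ {b | x - b ∈ C}) :=
    hU.inter (hC.preimage (continuous_const.sub continuous_id))
  obtain ⟨b, hbA, hbU, hxb⟩ :=
    hA.exists_mem_open hopen ⟨x - y, hxy, by simpa only [Set.mem_ofPred_eq, sub_sub_cancel]⟩
  exact ⟨-b, A.neg_mem hbA, by rwa [← sub_eq_add_neg], by rwa [neg_neg]⟩

end TopologicalAddGroup

theorem zero_mem_closure_interior_of_smul_mem {E : Type*} [AddCommGroup E] [TopologicalSpace E]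
    [Module ℝ E] [ContinuousSMul ℝ E] {γ : Set E} (hsmul : ∀ c : ℝ, 0 < c → ∀ x ∈ γ, c • x ∈ γ)
    (hint : (interior γ).Nonempty) : (0 : E) ∈ closure (interior γ) := by
  obtain ⟨v, hv⟩ := hint
  have hray : ∀ t : ℝ, 0 < t → t • v ∈ interior γ := fun t ht => by
    have hsub : interior (t • γ) ⊆ interior γ :=
      interior_mono (Set.smul_set_subset_iff.mpr (hsmul t ht))
    rw [interior_smul₀ ht.ne'] at hsub
    exact hsub (Set.smul_mem_smul_set hv)
  have hlim : Tendsto (fun t : ℝ => t • v) (𝓝[>] 0) (𝓝 0) :=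
    ((continuous_id.smul continuous_const).tendsto' 0 0 (zero_smul ℝ v)).mono_left
      nhdsWithin_le_nhds
  exact mem_closure_of_tendsto hlim (eventually_nhdsWithin_of_forall hray)

theorem gammaInterior_dense_translates_basis_general {n : ℕ} (γ : Set (EuclideanSpace ℝ (Fin n)))
    (hadd : ∀ x ∈ γ, ∀ y ∈ γ, x + y ∈ γ)
    (hsmul : ∀ c : ℝ, 0 < c → ∀ x ∈ γ, c • x ∈ γ)
    (hint : (interior γ).Nonempty)
    (A : AddSubgroup (EuclideanSpace ℝ (Fin n)))
    (hA : Dense (A : Set (EuclideanSpace ℝ (Fin n)))) :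
    (∀ a ∈ A,
        IsOpen {x : EuclideanSpace ℝ (Fin n) | x + a ∈ interior γ} ∧
        {x : EuclideanSpace ℝ (Fin n) | x + a ∈ interior γ} + γ =
          {x : EuclideanSpace ℝ (Fin n) | x + a ∈ interior γ}) ∧
    (∀ U : Set (EuclideanSpace ℝ (Fin n)), IsOpen U → U + γ = U →
        ∀ x ∈ U, ∃ a ∈ A,
          x ∈ {y : EuclideanSpace ℝ (Fin n) | y + a ∈ interior γ} ∧
          {y : EuclideanSpace ℝ (Fin n) | y + a ∈ interior γ} ⊆ U) := by
  have hinterior : interior γ + γ ⊆ interior γ :=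
    interior_add_subset_interior (Set.add_subset_iff.mpr hadd)
  have hC0 : 0 ∈ closure (interior γ) := zero_mem_closure_interior_of_smul_mem hsmul hint
  refine ⟨fun a _ => ?_, fun U hU hUγ x hx => ?_⟩
  · have hopen : IsOpen {x | x + a ∈ interior γ} :=
      isOpen_interior.preimage (continuous_id.add continuous_const)
    exact ⟨hopen, hopen.add_eq_of_add_subset (preimage_add_right_add_subset hinterior a)
      (closure_mono interior_subset hC0)⟩
  · obtain ⟨a, haA, hxa, hna⟩ :=
      exists_mem_add_mem_neg_mem_of_dense hA isOpen_interior hC0 hU hx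
    refine ⟨a, haA, hxa, fun y hy => ?_⟩
    rw [← hUγ]
    exact ⟨-a, hna, y + a, interior_subset hy, neg_add_cancel_comm_assoc a y⟩

/-- For a closed convex cone `γ ⊆ ℝⁿ` with nonempty interior and a dense additive
subgroup `A ⊆ ℝⁿ`, already the translates `γ̊ - a` with `a ∈ A` form a basis of the
γ-topology. -/
theorem gammaInterior_dense_translates_basis {n : ℕ} (γ : Set (EuclideanSpace ℝ (Fin n)))
    (hclosed : IsClosed γ)
    (hadd : ∀ x ∈ γ, ∀ y ∈ γ, x + y ∈ γ)
    (hsmul : ∀ c : ℝ, 0 < c → ∀ x ∈ γ, c • x ∈ γ)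
    (hint : (interior γ).Nonempty)
    (A : AddSubgroup (EuclideanSpace ℝ (Fin n)))
    (hA : Dense (A : Set (EuclideanSpace ℝ (Fin n)))) :
    (∀ a ∈ A,
        IsOpen {x : EuclideanSpace ℝ (Fin n) | x + a ∈ interior γ} ∧
        {x : EuclideanSpace ℝ (Fin n) | x + a ∈ interior γ} + γ =
          {x : EuclideanSpace ℝ (Fin n) | x + a ∈ interior γ}) ∧
    (∀ U : Set (EuclideanSpace ℝ (Fin n)), IsOpen U → U + γ = U →
        ∀ x ∈ U, ∃ a ∈ A,
          x ∈ {y : EuclideanSpace ℝ (Fin n) | y + a ∈ interior γ} ∧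
          {y : EuclideanSpace ℝ (Fin n) | y + a ∈ interior γ} ⊆ U) :=
  gammaInterior_dense_translates_basis_general γ hadd hsmul hint A hA
end

section
/- Let σ₁, σ₂ be polyhedral closed convex cones in ℝ^n whose intersection τ = σ₁ ∩ σ₂ is a face of each. Then τ∨ = σ₁∨ + σ₂∨ (Minkowski sum of the dual cones). -/
/-!
Write `σᵢ` as the cone cut out by a finite set `sᵢ`, i.e. the inner dual of `sᵢ`. Then `σ₁ ∩ σ₂`
is cut out by `s₁ ∪ s₂`, and by Farkas' lemma the dual of the cone cut out by a finite set `s` is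
the conic hull of `s`, so both sides equal `hull (s₁ ∪ s₂) = hull s₁ + hull s₂`. Farkas' lemma
applies because finitely generated cones are closed: by the conic Carathéodory theorem such a cone
is the finite union of the hulls of its linearly independent generating subsets, and each of those
is the image of a closed orthant under an injective linear map of a finite-dimensional space.
-/

open scoped RealInnerProductSpace Pointwise

/-- The polar dual cone of a subset of `ℝⁿ`. -/
def dualCone {n : ℕ} (σ : Set (EuclideanSpace ℝ (Fin n))) : Set (EuclideanSpace ℝ (Fin n)) :=
  {v | ∀ w ∈ σ, 0 ≤ ⟪v, w⟫}

/-- A polyhedral cone: a finite intersection of closed linear half-spaces. -/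
def IsPolyhedralCone {n : ℕ} (σ : Set (EuclideanSpace ℝ (Fin n))) : Prop :=
  ∃ s : Finset (EuclideanSpace ℝ (Fin n)), σ = {x | ∀ m ∈ s, 0 ≤ ⟪m, x⟫}

/-- `τ` is a face of `σ`: it is cut out of `σ` by a supporting hyperplane `⟪m, ·⟫ = 0`
with `m` in the dual cone of `σ`. -/
def IsFaceOf {n : ℕ} (τ σ : Set (EuclideanSpace ℝ (Fin n))) : Prop :=
  ∃ m ∈ dualCone σ, τ = σ ∩ {x | ⟪m, x⟫ = 0}

namespace PointedCone

section OrderedSemiring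

variable {R M : Type*} [Semiring R] [PartialOrder R] [IsOrderedRing R]
  [AddCommMonoid M] [Module R M]

lemma mem_hull_finset {s : Finset M} {x : M} :
    x ∈ hull R (s : Set M) ↔ ∃ c : M → R, (∀ v ∈ s, 0 ≤ c v) ∧ ∑ v ∈ s, c v • v = x := by
  classical
  rw [Submodule.mem_span_finset]
  constructor
  · rintro ⟨f, -, rfl⟩
    exact ⟨fun v => f v, fun v _ => (f v).2, rfl⟩
  · rintro ⟨c, hc, rfl⟩
    refine ⟨fun v => if hv : v ∈ s then ⟨c v, hc v hv⟩ else 0, fun v hv => ?_,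
      Finset.sum_congr rfl fun v hv => by simp [hv, Nonneg.mk_smul]⟩
    by_contra hvs
    exact hv (dif_neg hvs)

end OrderedSemiring

section OrderedField

variable {R M : Type*} [Field R] [LinearOrder R] [IsStrictOrderedRing R]
  [AddCommGroup M] [Module R M]

lemma exists_mem_hull_erase_of_sum_smul_eq_zero [DecidableEq M] {s : Finset M} {x : M}
    {d : M → R} (hx : x ∈ hull R (s : Set M)) (hd : ∑ v ∈ s, d v • v = 0)
    (hpos : ∃ v ∈ s, 0 < d v) :
    ∃ v ∈ s, x ∈ hull R (s.erase v : Set M) := by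
  obtain ⟨c, hc, rfl⟩ := mem_hull_finset.mp hx
  -- Move from `c` along `-d` as far as the coefficients stay nonnegative: the step `r` is the
  -- least ratio `c v / d v` over `d v > 0`, and the coefficient at a minimiser `v₀` drops to `0`.
  obtain ⟨v₀, hv₀, hmin⟩ := Finset.exists_min_image (s.filter (0 < d ·)) (fun v => c v / d v)
    (let ⟨v, hv, hdv⟩ := hpos; ⟨v, Finset.mem_filter.mpr ⟨hv, hdv⟩⟩)
  obtain ⟨hv₀s, hdv₀⟩ := Finset.mem_filter.mp hv₀
  set r := c v₀ / d v₀
  have hr : 0 ≤ r := div_nonneg (hc v₀ hv₀s) hdv₀.le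
  have hc' : ∀ v ∈ s, 0 ≤ c v - r * d v := by
    intro v hv
    rcases lt_or_ge 0 (d v) with hdv | hdv
    · linarith [(le_div_iff₀ hdv).mp (hmin v (Finset.mem_filter.mpr ⟨hv, hdv⟩))]
    · nlinarith [hc v hv]
  have hv₀zero : c v₀ - r * d v₀ = 0 := by rw [div_mul_cancel₀ _ hdv₀.ne', sub_self]
  refine ⟨v₀, hv₀s, mem_hull_finset.mpr ⟨fun v => c v - r * d v,
    fun v hv => hc' v (Finset.mem_of_mem_erase hv), ?_⟩⟩
  rw [Finset.sum_erase _ (by simp only [hv₀zero, zero_smul])]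
  simp only [sub_smul, mul_smul, Finset.sum_sub_distrib, ← Finset.smul_sum, hd, smul_zero,
    sub_zero]

theorem exists_linearIndepOn_of_mem_hull {s : Finset M} {x : M} (hx : x ∈ hull R (s : Set M)) :
    ∃ t ⊆ s, LinearIndepOn R id (t : Set M) ∧ x ∈ hull R (t : Set M) := by
  classical
  induction s using Finset.strongInduction with
  | H s ih =>
  by_cases hli : LinearIndepOn R id (s : Set M)
  · exact ⟨s, subset_rfl, hli, hx⟩
  obtain ⟨d, hd, v, hv, hdv⟩ := not_linearIndepOn_finset_iff.mp hli
  obtain ⟨w, hw, hxw⟩ : ∃ w ∈ s, x ∈ hull R (s.erase w : Set M) := by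
    rcases hdv.lt_or_gt with hneg | hpos
    · refine exists_mem_hull_erase_of_sum_smul_eq_zero (d := -d) hx ?_ ⟨v, hv, neg_pos.mpr hneg⟩
      simpa only [Pi.neg_apply, neg_smul, Finset.sum_neg_distrib, neg_eq_zero, id] using hd
    · exact exists_mem_hull_erase_of_sum_smul_eq_zero hx hd ⟨v, hv, hpos⟩
  obtain ⟨t, hts, ht, hxt⟩ := ih _ (Finset.erase_ssubset hw) hxw
  exact ⟨t, hts.trans (s.erase_subset w), ht, hxt⟩

end OrderedField

section Topology

variable {M : Type*} [AddCommGroup M] [Module ℝ M] [TopologicalSpace M] [IsTopologicalAddGroup M]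
  [ContinuousSMul ℝ M] [T2Space M]

theorem isClosed_hull_of_linearIndepOn {t : Finset M} (ht : LinearIndepOn ℝ id (t : Set M)) :
    IsClosed (hull ℝ (t : Set M) : Set M) := by
  let f := Fintype.linearCombination ℝ (Subtype.val : t → M)
  have hf : LinearMap.ker f = ⊥ :=
    LinearMap.ker_eq_bot.mpr (LinearIndependent.fintypeLinearCombination_injective ht)
  have himage : (hull ℝ (t : Set M) : Set M) = f '' Set.univ.pi fun _ => Set.Ici 0 := by
    ext x
    simp only [SetLike.mem_coe, Submodule.mem_span_finset', Set.mem_image, Set.mem_pi,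
      Set.mem_univ, Set.mem_Ici, forall_const, f, Fintype.linearCombination_apply]
    constructor
    · rintro ⟨g, rfl⟩
      exact ⟨fun i => g i, fun i => (g i).2, rfl⟩
    · rintro ⟨c, hc, rfl⟩
      exact ⟨fun i => ⟨c i, hc i⟩, rfl⟩
  rw [himage]
  exact (LinearMap.isClosedEmbedding_of_injective hf).isClosedMap _
    (isClosed_set_pi fun _ _ => isClosed_Ici)

theorem isClosed_hull_finset (s : Finset M) : IsClosed (hull ℝ (s : Set M) : Set M) := by
  have hunion : (hull ℝ (s : Set M) : Set M) =
      ⋃ t ∈ {t : Finset M | t ⊆ s ∧ LinearIndepOn ℝ id (t : Set M)}, hull ℝ (t : Set M) := by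
    ext x
    simp only [Set.mem_iUnion, Set.mem_ofPred_eq, exists_prop]
    constructor
    · intro hx
      obtain ⟨t, hts, ht, hxt⟩ := exists_linearIndepOn_of_mem_hull hx
      exact ⟨t, ⟨hts, ht⟩, hxt⟩
    · rintro ⟨t, ⟨hts, -⟩, hxt⟩
      exact Submodule.span_mono (Finset.coe_subset.mpr hts) hxt
  rw [hunion]
  exact Set.Finite.isClosed_biUnion (s.powerset.finite_toSet.subset fun t ht =>
    Finset.mem_powerset.mpr ht.1) fun t ht => isClosed_hull_of_linearIndepOn ht.2

end Topology

end PointedCone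

theorem ProperCone.innerDual_innerDual_finset {E : Type*} [NormedAddCommGroup E]
    [InnerProductSpace ℝ E] [CompleteSpace E] (s : Finset E) :
    (innerDual (innerDual (s : Set E) : Set E) : Set E) = PointedCone.hull ℝ (s : Set E) := by
  let C : ProperCone ℝ E := ⟨PointedCone.hull ℝ (s : Set E), PointedCone.isClosed_hull_finset s⟩
  have hC : innerDual (C : Set E) = innerDual (s : Set E) := by
    ext y
    exact SetLike.ext_iff.mp (PointedCone.dual_hull (p := innerₗ E) (s : Set E)) y
  rw [← hC, innerDual_innerDual]
  rfl

lemma dualCone_eq_innerDual {n : ℕ} (A : Set (EuclideanSpace ℝ (Fin n))) :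
    dualCone A = ProperCone.innerDual A := by
  ext v
  simp only [dualCone, Set.mem_ofPred_eq, SetLike.mem_coe, ProperCone.mem_innerDual,
    real_inner_comm v]

lemma dualCone_halfspaces_eq_hull {n : ℕ} (s : Finset (EuclideanSpace ℝ (Fin n))) :
    dualCone {x | ∀ m ∈ s, 0 ≤ ⟪m, x⟫} =
      (PointedCone.hull ℝ (s : Set (EuclideanSpace ℝ (Fin n))) : Set _) := by
  rw [← ProperCone.innerDual_innerDual_finset, dualCone_eq_innerDual]
  rfl

theorem dualCone_inter_eq_add_general {n : ℕ}
    (σ₁ σ₂ : Set (EuclideanSpace ℝ (Fin n)))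
    (hp₁ : IsPolyhedralCone σ₁) (hp₂ : IsPolyhedralCone σ₂) :
    dualCone (σ₁ ∩ σ₂) = dualCone σ₁ + dualCone σ₂ := by
  classical
  obtain ⟨s₁, rfl⟩ := hp₁
  obtain ⟨s₂, rfl⟩ := hp₂
  have hinter : {x : EuclideanSpace ℝ (Fin n) | ∀ m ∈ s₁, 0 ≤ ⟪m, x⟫}
      ∩ {x | ∀ m ∈ s₂, 0 ≤ ⟪m, x⟫} = {x | ∀ m ∈ s₁ ∪ s₂, 0 ≤ ⟪m, x⟫} := by
    ext x
    simp only [Set.mem_inter_iff, Set.mem_ofPred_eq, Finset.mem_union, or_imp, forall_and]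
  rw [hinter, dualCone_halfspaces_eq_hull, dualCone_halfspaces_eq_hull,
    dualCone_halfspaces_eq_hull, Finset.coe_union, PointedCone.hull, Submodule.span_union,
    Submodule.coe_sup]

/-- If `σ₁, σ₂` are polyhedral closed convex cones whose intersection `τ = σ₁ ∩ σ₂` is a
face of each, then `τ∨ = σ₁∨ + σ₂∨` (Minkowski sum of the dual cones). -/
theorem dualCone_inter_eq_add {n : ℕ}
    (σ₁ σ₂ : Set (EuclideanSpace ℝ (Fin n)))
    (hp₁ : IsPolyhedralCone σ₁) (hp₂ : IsPolyhedralCone σ₂)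
    (hface₁ : IsFaceOf (σ₁ ∩ σ₂) σ₁) (hface₂ : IsFaceOf (σ₁ ∩ σ₂) σ₂) :
    dualCone (σ₁ ∩ σ₂) = dualCone σ₁ + dualCone σ₂ :=
  dualCone_inter_eq_add_general σ₁ σ₂ hp₁ hp₂
end
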